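/- Let G be an abelian group, Z1,…,Zn independent discrete random variables in G, C a collection of subsets of [n], and α: C → ℝ≥0 a fractional covering (meaning for every i ∈ [n], ∑_{s∈C, i∈s} α_s ≥ 1). Then H(Z1+⋯+Zn) ≤ ∑_{s∈C} α_s · H(∑_{i∈s} Z_i). -/

import Mathlib

/-!
Write `f s = H(∑ i ∈ s, Zᵢ)` and order the indices. Then `H(Z₁ + ⋯ + Zₙ)` telescopes into the
increments `f [1, i] - f [1, i)`. For independent summands `f` is monotone and submodular, the
latter being the Kaimanovich–Vershik–Madiman inequality
`H(X + Y + V) + H(Y) ≤ H(X + Y) + H(Y + V)`, i.e. `I(X ; X + Y | X + Y + V) ≥ 0`. Hence the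
increments are nonnegative and those indexed by `s` sum to at most `f s`; weighting them by the
fractional cover gives the bound, as in Shearer's lemma.
-/

open Finset

/-- Shannon entropy of a discrete random variable `X` on a finite probability
space with probability mass function `p`. -/
noncomputable def ent {Ω S : Type*} [Fintype Ω] (p : Ω → ℝ) (X : Ω → S) : ℝ :=
  letI := Classical.decEq S
  ∑ y ∈ Finset.univ.image X,
    Real.negMulLog (∑ ω ∈ Finset.univ.filter (fun ω => X ω = y), p ω)

/-- Conditional Shannon entropy `H(X | Y)`. -/
noncomputable def condEnt {Ω S T : Type*} [Fintype Ω] (p : Ω → ℝ)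
    (X : Ω → S) (Y : Ω → T) : ℝ :=
  ent p (fun ω => (X ω, Y ω)) - ent p Y

/-- Mutual information `I(X ; Y)`. -/
noncomputable def mutInf {Ω S T : Type*} [Fintype Ω] (p : Ω → ℝ)
    (X : Ω → S) (Y : Ω → T) : ℝ :=
  ent p X + ent p Y - ent p (fun ω => (X ω, Y ω))

/-- `p` is a probability mass function. -/
def IsProbMass {Ω : Type*} [Fintype Ω] (p : Ω → ℝ) : Prop :=
  (∀ ω, 0 ≤ p ω) ∧ ∑ ω, p ω = 1

/-- The random variables `Z i` are mutually independent. -/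
def IndepRVs {Ω G : Type*} [Fintype Ω] {n : ℕ} (p : Ω → ℝ) (Z : Fin n → Ω → G) : Prop :=
  letI := Classical.decEq G
  ∀ z : Fin n → G,
    (∑ ω ∈ Finset.univ.filter (fun ω => ∀ i, Z i ω = z i), p ω)
      = ∏ i, ∑ ω ∈ Finset.univ.filter (fun ω => Z i ω = z i), p ω

open Real Function

section Entropy

variable {Ω S T U V : Type*} [Fintype Ω] {p : Ω → ℝ}

noncomputable def law (p : Ω → ℝ) (X : Ω → S) (y : S) : ℝ :=
  letI := Classical.decEq S
  ∑ ω with X ω = y, p ω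

theorem law_def [DecidableEq S] (p : Ω → ℝ) (X : Ω → S) (y : S) :
    law p X y = ∑ ω with X ω = y, p ω := by
  unfold law; congr!

theorem ent_eq_sum_law [DecidableEq S] (p : Ω → ℝ) (X : Ω → S) :
    ent p X = ∑ y ∈ univ.image X, negMulLog (law p X y) := by
  unfold ent law; congr!

theorem law_nonneg (hp : ∀ ω, 0 ≤ p ω) (X : Ω → S) (y : S) : 0 ≤ law p X y := by
  classical
  rw [law_def]
  exact sum_nonneg fun ω _ => hp ω

theorem sum_law [DecidableEq S] (p : Ω → ℝ) (X : Ω → S) (t : Finset S) :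
    ∑ y ∈ t, law p X y = ∑ ω with X ω ∈ t, p ω := by
  simp only [law_def]
  exact sum_fiberwise_eq_sum_filter _ _ _ _

theorem sum_law_eq_one [DecidableEq S] (hp : IsProbMass p) {X : Ω → S} {t : Finset S}
    (h : univ.image X ⊆ t) : ∑ y ∈ t, law p X y = 1 := by
  rw [sum_law, filter_true_of_mem fun ω _ => h (mem_image_of_mem X (mem_univ ω)), hp.2]

theorem law_eq_zero_of_notMem_image [DecidableEq S] {X : Ω → S} {y : S}
    (h : y ∉ univ.image X) : law p X y = 0 := by
  rw [law_def, filter_false_of_mem, sum_empty]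
  rintro ω - rfl
  exact h (mem_image_of_mem X (mem_univ ω))

theorem ent_eq_sum_law_of_subset [DecidableEq S] (p : Ω → ℝ) (X : Ω → S) {t : Finset S}
    (h : univ.image X ⊆ t) : ent p X = ∑ y ∈ t, negMulLog (law p X y) := by
  rw [ent_eq_sum_law]
  exact sum_subset h fun y _ hy => by rw [law_eq_zero_of_notMem_image hy, negMulLog_zero]

theorem ent_const (hp : IsProbMass p) (c : S) : ent p (fun _ => c) = 0 := by
  classical
  rw [ent_eq_sum_law_of_subset p _ (image_subset_iff.2 fun _ _ => mem_singleton_self c),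
    sum_singleton, law_def, filter_true_of_mem fun _ _ => rfl, hp.2, negMulLog_one]

theorem law_comp_of_injective [DecidableEq S] [DecidableEq U] {f : S → U} (hf : Injective f)
    (p : Ω → ℝ) (X : Ω → S) (y : S) : law p (fun ω => f (X ω)) (f y) = law p X y := by
  simp only [law_def, hf.eq_iff]

theorem ent_comp_of_injective {f : S → U} (hf : Injective f) (p : Ω → ℝ) (X : Ω → S) :
    ent p (fun ω => f (X ω)) = ent p X := by
  classical
  rw [ent_eq_sum_law, ent_eq_sum_law, show univ.image (fun ω => f (X ω)) = (univ.image X).image f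
    from (image_image ..).symm, sum_image hf.injOn]
  simp only [law_comp_of_injective hf]

theorem law_comp_eq_sum [DecidableEq S] [DecidableEq U] (X : Ω → S) (g : S → U) (u : U) :
    law p (fun ω => g (X ω)) u = ∑ x ∈ univ.image X with g x = u, law p X x := by
  rw [sum_law, law_def]
  congr 1
  ext ω
  simp

def IndepPair (p : Ω → ℝ) (X : Ω → S) (Y : Ω → T) : Prop :=
  ∀ x y, law p (fun ω => (X ω, Y ω)) (x, y) = law p X x * law p Y y

theorem IndepPair.comp {X : Ω → S} {Y : Ω → T} (h : IndepPair p X Y) (f : S → U) (g : T → V) :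
    IndepPair p (fun ω => f (X ω)) (fun ω => g (Y ω)) := by
  classical
  intro u v
  rw [law_comp_eq_sum X f, law_comp_eq_sum Y g, sum_mul_sum, ← sum_product',
    sum_congr rfl fun z _ => (h z.1 z.2).symm, sum_law, law_def]
  congr 1
  ext ω
  simp [Prod.ext_iff]

theorem IndepPair.ent_pair (hp : IsProbMass p) {X : Ω → S} {Y : Ω → T} (h : IndepPair p X Y) :
    ent p (fun ω => (X ω, Y ω)) = ent p X + ent p Y := by
  classical
  have hprod : univ.image (fun ω => (X ω, Y ω)) ⊆ univ.image X ×ˢ univ.image Y := by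
    simp [image_subset_iff]
  rw [ent_eq_sum_law_of_subset p _ hprod, sum_product, ent_eq_sum_law p X, ent_eq_sum_law p Y]
  unfold IndepPair at h
  simp only [h, negMulLog_mul, sum_add_distrib, ← sum_mul, ← mul_sum,
    sum_law_eq_one hp subset_rfl, one_mul]

theorem sum_law_pair_right [DecidableEq S] [DecidableEq T] (X : Ω → S) (Y : Ω → T) (x : S)
    {t : Finset T} (h : univ.image Y ⊆ t) :
    ∑ y ∈ t, law p (fun ω => (X ω, Y ω)) (x, y) = law p X x := by
  rw [← sum_singleton (fun x' => ∑ y ∈ t, law p (fun ω => (X ω, Y ω)) (x', y)) x,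
    ← sum_product', sum_law, law_def]
  congr 1
  ext ω
  simp [h (mem_image_of_mem Y (mem_univ ω)), eq_comm]

-- `p` conditioned on `Y = y`; identically zero when `law p Y y = 0`.
noncomputable def condMass (p : Ω → ℝ) (Y : Ω → T) (y : T) (ω : Ω) : ℝ :=
  letI := Classical.decEq T
  if Y ω = y then p ω / law p Y y else 0

theorem condMass_def [DecidableEq T] (p : Ω → ℝ) (Y : Ω → T) (y : T) (ω : Ω) :
    condMass p Y y ω = if Y ω = y then p ω / law p Y y else 0 := by
  unfold condMass; congr!

theorem law_condMass [DecidableEq S] [DecidableEq T] (p : Ω → ℝ) (X : Ω → S) (Y : Ω → T)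
    (x : S) (y : T) :
    law (condMass p Y y) X x = law p (fun ω => (X ω, Y ω)) (x, y) / law p Y y := by
  simp only [law_def, condMass_def]
  rw [← sum_filter, filter_filter, sum_div]
  congr 1
  ext ω
  simp [Prod.ext_iff]

theorem condMass_nonneg [DecidableEq T] (hp : ∀ ω, 0 ≤ p ω) (Y : Ω → T) (y : T) (ω : Ω) :
    0 ≤ condMass p Y y ω := by
  rw [condMass_def]
  split_ifs
  exacts [div_nonneg (hp ω) (law_nonneg hp Y y), le_rfl]

theorem isProbMass_condMass [DecidableEq T] (hp : ∀ ω, 0 ≤ p ω) {Y : Ω → T} {y : T}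
    (hy : law p Y y ≠ 0) : IsProbMass (condMass p Y y) := by
  refine ⟨condMass_nonneg hp Y y, ?_⟩
  simp only [condMass_def]
  rw [← sum_filter, ← sum_div, ← law_def, div_self hy]

theorem law_pair_eq_mul_law_condMass [DecidableEq S] [DecidableEq T] (hp : ∀ ω, 0 ≤ p ω)
    (X : Ω → S) (Y : Ω → T) (x : S) (y : T) :
    law p (fun ω => (X ω, Y ω)) (x, y) = law p Y y * law (condMass p Y y) X x := by
  rw [law_condMass]
  by_cases hy : law p Y y = 0
  · have hle : law p (fun ω => (X ω, Y ω)) (x, y) ≤ law p Y y := by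
      simp only [law_def]
      exact sum_le_sum_of_subset_of_nonneg (by intro ω; simp_all [Prod.ext_iff])
        fun ω _ _ => hp ω
    rw [hy, zero_mul]
    exact le_antisymm (hy ▸ hle) (law_nonneg hp _ _)
  · rw [mul_div_cancel₀ _ hy]

theorem condEnt_eq_sum [DecidableEq T] (hp : ∀ ω, 0 ≤ p ω) (X : Ω → S) (Y : Ω → T) :
    condEnt p X Y = ∑ y ∈ univ.image Y, law p Y y * ent (condMass p Y y) X := by
  classical
  have hprod : univ.image (fun ω => (X ω, Y ω)) ⊆ univ.image X ×ˢ univ.image Y := by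
    simp [image_subset_iff]
  rw [condEnt, ent_eq_sum_law_of_subset p _ hprod, sum_product_right, ent_eq_sum_law p Y,
    ← sum_sub_distrib]
  refine sum_congr rfl fun y _ => ?_
  by_cases hy : law p Y y = 0
  · simp [law_pair_eq_mul_law_condMass hp, hy]
  · simp only [law_pair_eq_mul_law_condMass hp, negMulLog_mul, sum_add_distrib, ← sum_mul,
      ← mul_sum, sum_law_eq_one (isProbMass_condMass hp hy) subset_rfl, ent_eq_sum_law]
    ring

theorem condEnt_le_ent (hp : IsProbMass p) (X : Ω → S) (Y : Ω → T) :
    condEnt p X Y ≤ ent p X := by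
  classical
  rw [condEnt_eq_sum hp.1, ent_eq_sum_law p X]
  simp only [ent_eq_sum_law, mul_sum]
  rw [sum_comm]
  refine sum_le_sum fun x _ => ?_
  have hmix : law p X x = ∑ y ∈ univ.image Y, law p Y y * law (condMass p Y y) X x := by
    simp only [← law_pair_eq_mul_law_condMass hp.1, sum_law_pair_right X Y x subset_rfl]
  rw [hmix]
  exact concaveOn_negMulLog.le_map_sum (fun y _ => law_nonneg hp.1 Y y)
    (sum_law_eq_one hp subset_rfl) fun y _ => law_nonneg (condMass_nonneg hp.1 Y y) X x

theorem ent_pair_le_add (hp : IsProbMass p) (X : Ω → S) (Y : Ω → T) :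
    ent p (fun ω => (X ω, Y ω)) ≤ ent p X + ent p Y := by
  have := condEnt_le_ent hp X Y
  rw [condEnt] at this
  linarith

theorem condEnt_pair_le_add (hp : IsProbMass p) (X : Ω → S) (A : Ω → T) (C : Ω → U) :
    condEnt p (fun ω => (X ω, A ω)) C ≤ condEnt p X C + condEnt p A C := by
  classical
  simp only [condEnt_eq_sum hp.1, ← sum_add_distrib, ← mul_add]
  refine sum_le_sum fun c _ => ?_
  by_cases hc : law p C c = 0
  · simp [hc]
  · exact mul_le_mul_of_nonneg_left (ent_pair_le_add (isProbMass_condMass hp.1 hc) X A)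
      (law_nonneg hp.1 C c)

end Entropy

section GroupValued

variable {Ω S G : Type*} [Fintype Ω] [AddCommGroup G] {p : Ω → ℝ}

theorem ent_pair_shear (W : Ω → S) (g : S → G) (Y : Ω → G) :
    ent p (fun ω => (W ω, g (W ω) + Y ω)) = ent p (fun ω => (W ω, Y ω)) := by
  refine ent_comp_of_injective (f := fun z : S × G => (z.1, g z.1 + z.2)) ?_ p
    (fun ω => (W ω, Y ω))
  rintro ⟨w, y⟩ ⟨w', y'⟩ h
  obtain ⟨rfl, h⟩ := Prod.ext_iff.1 h
  simpa using h

theorem ent_le_ent_add (hp : IsProbMass p) {X Y : Ω → G} (h : IndepPair p X Y) :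
    ent p Y ≤ ent p (fun ω => X ω + Y ω) := by
  have hsub := ent_pair_le_add hp X (fun ω => X ω + Y ω)
  have hpair : ent p (fun ω => (X ω, X ω + Y ω)) = ent p X + ent p Y :=
    (ent_pair_shear X id Y).trans (h.ent_pair hp)
  linarith

theorem ent_add_add_add_ent_le (hp : IsProbMass p) {X Y V : Ω → G}
    (hXY_V : IndepPair p (fun ω => (X ω, Y ω)) V) (hX_YV : IndepPair p X (fun ω => (Y ω, V ω)))
    (hX_Y : IndepPair p X Y) :
    ent p (fun ω => X ω + Y ω + V ω) + ent p Y
      ≤ ent p (fun ω => X ω + Y ω) + ent p (fun ω => Y ω + V ω) := by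
  have key := condEnt_pair_le_add hp X (fun ω => X ω + Y ω) (fun ω => X ω + Y ω + V ω)
  have hXYV : ent p (fun ω => ((X ω, X ω + Y ω), X ω + Y ω + V ω))
      = ent p X + ent p Y + ent p V := calc
    _ = ent p (fun ω => ((X ω, X ω + Y ω), V ω)) := ent_pair_shear _ Prod.snd V
    _ = ent p (fun ω => (X ω, X ω + Y ω)) + ent p V :=
      (hXY_V.comp (fun z => (z.1, z.1 + z.2)) id).ent_pair hp
    _ = ent p (fun ω => (X ω, Y ω)) + ent p V := congrArg (· + ent p V) (ent_pair_shear X id Y)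
    _ = _ := by rw [hX_Y.ent_pair hp]
  have hX : ent p (fun ω => (X ω, X ω + Y ω + V ω)) = ent p X + ent p (fun ω => Y ω + V ω) := calc
    _ = ent p (fun ω => (X ω, X ω + (Y ω + V ω))) := by simp only [add_assoc]
    _ = ent p (fun ω => (X ω, Y ω + V ω)) := ent_pair_shear X id _
    _ = _ := (hX_YV.comp id (fun z => z.1 + z.2)).ent_pair hp
  have hXY : ent p (fun ω => (X ω + Y ω, X ω + Y ω + V ω))
      = ent p (fun ω => X ω + Y ω) + ent p V :=
    (ent_pair_shear _ id V).trans ((hXY_V.comp (fun z => z.1 + z.2) id).ent_pair hp)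
  rw [condEnt, condEnt, condEnt, hXYV, hX, hXY] at key
  linarith

end GroupValued

section IndepRVs

variable {Ω G : Type*} [Fintype Ω] {n : ℕ} {p : Ω → ℝ} {Z : Fin n → Ω → G}

theorem IndepRVs.law_pi (hZ : IndepRVs p Z) (z : Fin n → G) :
    law p (fun ω i => Z i ω) z = ∏ i, law p (Z i) (z i) := by
  classical
  simp only [law_def, funext_iff]
  convert hZ z using 3

theorem IndepRVs.mass_forall_mem [DecidableEq G] (hp : IsProbMass p) (hZ : IndepRVs p Z)
    (a : Finset (Fin n)) (t : Fin n → Finset G) :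
    ∑ ω with ∀ i ∈ a, Z i ω ∈ t i, p ω = ∏ i ∈ a, ∑ y ∈ t i, law p (Z i) y := by
  set t' : Fin n → Finset G := fun i => if i ∈ a then t i else univ.image (Z i)
  have hfactor : ∀ i,
      ∑ y ∈ t' i, law p (Z i) y = if i ∈ a then ∑ y ∈ t i, law p (Z i) y else 1 := by
    intro i
    split_ifs with hi
    · simp [t', hi]
    · simp only [t', if_neg hi, sum_law_eq_one hp subset_rfl]
  rw [← univ_inter a, ← prod_ite_mem, ← prod_congr rfl fun i _ => hfactor i, prod_univ_sum]
  simp only [← hZ.law_pi, sum_law]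
  congr 1
  ext ω
  simp only [mem_filter, mem_univ, true_and, Fintype.mem_piFinset, t']
  refine forall_congr' fun i => ?_
  split_ifs with hi <;> simp [hi]

theorem IndepRVs.indepPair_restrict (hp : IsProbMass p) (hZ : IndepRVs p Z)
    {s t : Finset (Fin n)} (hst : Disjoint s t) :
    IndepPair p (fun ω (i : s) => Z i ω) (fun ω (i : t) => Z i ω) := by
  classical
  intro ws wt
  set u : Fin n → Finset G := fun i =>
    if h : i ∈ s then {ws ⟨i, h⟩} else if h : i ∈ t then {wt ⟨i, h⟩} else ∅
  have hs : ∀ ω, (fun i : s => Z i ω) = ws ↔ ∀ i ∈ s, Z i ω ∈ u i := by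
    intro ω
    simp +contextual [funext_iff, u]
  have ht : ∀ ω, (fun i : t => Z i ω) = wt ↔ ∀ i ∈ t, Z i ω ∈ u i := by
    intro ω
    simp +contextual [funext_iff, u, disjoint_right.1 hst]
  simp only [law_def, Prod.mk.injEq, hs, ht, ← forall_mem_union, hZ.mass_forall_mem hp,
    prod_union hst]

theorem IndepRVs.indepPair_sum_pair [AddCommMonoid G] (hp : IsProbMass p) (hZ : IndepRVs p Z)
    {a b c d : Finset (Fin n)} (h : Disjoint (a ∪ b) (c ∪ d)) :
    IndepPair p (fun ω => (∑ i ∈ a, Z i ω, ∑ i ∈ b, Z i ω))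
      (fun ω => (∑ i ∈ c, Z i ω, ∑ i ∈ d, Z i ω)) := by
  have := (hZ.indepPair_restrict hp h).comp
    (fun w => (∑ i ∈ a.subtype (· ∈ a ∪ b), w i, ∑ i ∈ b.subtype (· ∈ a ∪ b), w i))
    (fun w => (∑ i ∈ c.subtype (· ∈ c ∪ d), w i, ∑ i ∈ d.subtype (· ∈ c ∪ d), w i))
  have hsub : ∀ {r s : Finset (Fin n)}, r ⊆ s →
      ∀ ω, ∑ i ∈ r.subtype (· ∈ s), Z i ω = ∑ i ∈ r, Z i ω :=
    fun hrs ω => sum_subtype_of_mem (fun i => Z i ω) hrs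
  simpa only [hsub subset_union_left, hsub subset_union_right] using this

end IndepRVs

section SumEntropy

variable {Ω G : Type*} [Fintype Ω] [AddCommGroup G] {n : ℕ} {p : Ω → ℝ} {Z : Fin n → Ω → G}

noncomputable def entSum (p : Ω → ℝ) (Z : Fin n → Ω → G) (s : Finset (Fin n)) : ℝ :=
  ent p (fun ω => ∑ i ∈ s, Z i ω)

theorem entSum_empty (hp : IsProbMass p) (Z : Fin n → Ω → G) : entSum p Z ∅ = 0 := by
  simpa [entSum] using ent_const hp (0 : G)

theorem IndepRVs.entSum_mono (hp : IsProbMass p) (hZ : IndepRVs p Z) : Monotone (entSum p Z) := by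
  intro s t hst
  have hindep : IndepPair p (fun ω => ∑ i ∈ t \ s, Z i ω) (fun ω => ∑ i ∈ s, Z i ω) :=
    (hZ.indepPair_sum_pair hp (a := t \ s) (b := t \ s) (c := s) (d := s)
      (by simpa using sdiff_disjoint)).comp Prod.fst Prod.fst
  have := ent_le_ent_add hp hindep
  simpa only [entSum, sum_sdiff hst] using this

theorem IndepRVs.entSum_submodular (hp : IsProbMass p) (hZ : IndepRVs p Z)
    (s t : Finset (Fin n)) :
    entSum p Z (s ∪ t) + entSum p Z (s ∩ t) ≤ entSum p Z s + entSum p Z t := by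
  have hs : ∀ ω, ∑ i ∈ s, Z i ω = ∑ i ∈ s \ t, Z i ω + ∑ i ∈ s ∩ t, Z i ω := fun ω => by
    rw [← sum_union (disjoint_sdiff_inter s t), sdiff_union_inter]
  have ht : ∀ ω, ∑ i ∈ t, Z i ω = ∑ i ∈ s ∩ t, Z i ω + ∑ i ∈ t \ s, Z i ω := fun ω => by
    rw [add_comm, inter_comm, ← sum_union (disjoint_sdiff_inter t s), sdiff_union_inter]
  have hst : ∀ ω, ∑ i ∈ s ∪ t, Z i ω
      = ∑ i ∈ s \ t, Z i ω + ∑ i ∈ s ∩ t, Z i ω + ∑ i ∈ t \ s, Z i ω := fun ω => by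
    rw [← hs, ← sum_union disjoint_sdiff, union_sdiff_self_eq_union]
  have hXY_V : IndepPair p (fun ω => (∑ i ∈ s \ t, Z i ω, ∑ i ∈ s ∩ t, Z i ω))
      (fun ω => ∑ i ∈ t \ s, Z i ω) :=
    (hZ.indepPair_sum_pair hp (a := s \ t) (b := s ∩ t) (c := t \ s) (d := t \ s)
      (by simpa [sdiff_union_inter] using disjoint_sdiff)).comp id Prod.fst
  have hX_YV : IndepPair p (fun ω => ∑ i ∈ s \ t, Z i ω)
      (fun ω => (∑ i ∈ s ∩ t, Z i ω, ∑ i ∈ t \ s, Z i ω)) :=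
    (hZ.indepPair_sum_pair hp (a := s \ t) (b := s \ t) (c := s ∩ t) (d := t \ s)
      (by rw [union_self, union_comm, inter_comm, sdiff_union_inter]; exact sdiff_disjoint)).comp
      Prod.fst id
  have hX_Y : IndepPair p (fun ω => ∑ i ∈ s \ t, Z i ω) (fun ω => ∑ i ∈ s ∩ t, Z i ω) :=
    (hZ.indepPair_sum_pair hp (a := s \ t) (b := s \ t) (c := s ∩ t) (d := s ∩ t)
      (by simpa using disjoint_sdiff_inter s t)).comp Prod.fst Prod.fst
  have key := ent_add_add_add_ent_le hp hXY_V hX_YV hX_Y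
  simpa only [entSum, hs, ht, hst] using key

end SumEntropy

section FractionalCovering

variable {ι : Type*} [LinearOrder ι] [LocallyFiniteOrderBot ι] {f : Finset ι → ℝ}

def marginalGain (f : Finset ι → ℝ) (i : ι) : ℝ :=
  f (Iic i) - f (Iio i)

theorem marginalGain_nonneg (hf : Monotone f) (i : ι) : 0 ≤ marginalGain f i :=
  sub_nonneg.2 (hf Iio_subset_Iic_self)

theorem sum_marginalGain_le (hf0 : f ∅ = 0)
    (hf : ∀ s t, f (s ∪ t) + f (s ∩ t) ≤ f s + f t) (s : Finset ι) :
    ∑ i ∈ s, marginalGain f i ≤ f s := by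
  induction s using Finset.induction_on_max with
  | empty => simp [hf0]
  | insert a s ha ih =>
    have has : a ∉ s := fun h => lt_irrefl a (ha a h)
    have hunion : insert a s ∪ Iio a = Iic a := by
      rw [insert_union, union_eq_right.2 fun x hx => mem_Iio.2 (ha x hx), Iio_insert]
    have hinter : insert a s ∩ Iio a = s := by
      rw [insert_inter_of_notMem notMem_Iio_self, inter_eq_left.2 fun x hx => mem_Iio.2 (ha x hx)]
    have := hf (insert a s) (Iio a)
    rw [hunion, hinter] at this
    rw [sum_insert has, marginalGain]
    linarith

theorem sum_marginalGain_of_isLowerSet (hf0 : f ∅ = 0) {s : Finset ι}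
    (hs : IsLowerSet (s : Set ι)) : ∑ i ∈ s, marginalGain f i = f s := by
  induction s using Finset.induction_on_max with
  | empty => simp [hf0]
  | insert a s ha ih =>
    have hs' : s = Iio a := by
      ext x
      refine ⟨fun hx => mem_Iio.2 (ha x hx), fun hx => ?_⟩
      exact (mem_insert.1 (hs (mem_Iio.1 hx).le (mem_insert_self a s))).resolve_left
        (mem_Iio.1 hx).ne
    subst hs'
    rw [sum_insert notMem_Iio_self, ih (by simpa using isLowerSet_Iio a), marginalGain,
      Iio_insert]
    ring

theorem le_sum_mul_of_fractionalCover [Fintype ι] (hf0 : f ∅ = 0) (hmono : Monotone f)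
    (hsub : ∀ s t, f (s ∪ t) + f (s ∩ t) ≤ f s + f t) {C : Finset (Finset ι)}
    {α : Finset ι → ℝ} (hα : ∀ s ∈ C, 0 ≤ α s) (hcov : ∀ i, 1 ≤ ∑ s ∈ C with i ∈ s, α s) :
    f univ ≤ ∑ s ∈ C, α s * f s := calc
  f univ = ∑ i, marginalGain f i :=
    (sum_marginalGain_of_isLowerSet hf0 (by simpa using isLowerSet_univ)).symm
  _ ≤ ∑ i, (∑ s ∈ C with i ∈ s, α s) * marginalGain f i :=
    sum_le_sum fun i _ => le_mul_of_one_le_left (marginalGain_nonneg hmono i) (hcov i)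
  _ = ∑ s ∈ C, α s * ∑ i ∈ s, marginalGain f i := by
    simp only [sum_filter, sum_mul, mul_sum, ite_mul, zero_mul]
    rw [sum_comm]
    simp
  _ ≤ ∑ s ∈ C, α s * f s :=
    sum_le_sum fun s hs => mul_le_mul_of_nonneg_left (sum_marginalGain_le hf0 hsub s) (hα s hs)

end FractionalCovering

/-- Fractional-covering upper bound for the entropy of a sum of independent random
variables in an abelian group. -/
theorem entropy_sum_fractional_covering {Ω G : Type*} [Fintype Ω] [AddCommGroup G] {n : ℕ}
    (p : Ω → ℝ) (hp : IsProbMass p) (Z : Fin n → Ω → G) (hZ : IndepRVs p Z)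
    (C : Finset (Finset (Fin n))) (α : Finset (Fin n) → ℝ)
    (hα : ∀ s ∈ C, 0 ≤ α s)
    (hcov : ∀ i : Fin n, 1 ≤ ∑ s ∈ C.filter (fun s => i ∈ s), α s) :
    ent p (fun ω => ∑ i, Z i ω)
      ≤ ∑ s ∈ C, α s * ent p (fun ω => ∑ i ∈ s, Z i ω) :=
  le_sum_mul_of_fractionalCover (entSum_empty hp Z) (hZ.entSum_mono hp) (hZ.entSum_submodular hp)
    hα hcov
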